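/- Massart's finite-class bound: for a finite class H of functions X → [-1,1] with |H| = M ≥ 1 and fixed sample x_1,…,x_n, the empirical Rademacher complexity satisfies R_n(H) ≤ √(2·log M / n). -/
import Mathlib

set_option maxHeartbeats 2000000
open Finset Real

/-- Massart's finite-class bound: for a finite nonempty class H of functions bounded
in [-1,1] on the sample, the empirical Rademacher complexity is at most
√(2·log|H| / n). -/
theorem massart_finite_class_bound {X : Type*} (n : ℕ) (hn : 0 < n)
    (x : Fin n → X) (H : Finset (X → ℝ)) (hH : H.Nonempty)
    (hbdd : ∀ h ∈ H, ∀ i : Fin n, |h (x i)| ≤ 1) :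
    (∑ σ : Fin n → Bool,
        H.sup' hH (fun h => ((1 : ℝ) / n) *
          ∑ i, (if σ i then (1 : ℝ) else -1) * h (x i))) / 2 ^ n
      ≤ Real.sqrt (2 * Real.log H.card / n) := by
  have hn' : (0:ℝ) < n := Nat.cast_pos.mpr hn
  set e : (Fin n → Bool) → Fin n → ℝ := fun σ i => if σ i then (1:ℝ) else -1 with he
  set G : (Fin n → Bool) → ℝ := fun σ => H.sup' hH (fun h => ∑ i, e σ i * h (x i)) with hG
  have hpull : ∀ σ : Fin n → Bool,
      H.sup' hH (fun h => ((1:ℝ)/n) * ∑ i, e σ i * h (x i)) = (1/n) * G σ := by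
    intro σ
    have h := Finset.comp_sup'_eq_sup'_comp hH
      (f := fun h : X → ℝ => ∑ i, e σ i * h (x i)) (fun y : ℝ => (1/n : ℝ) * y)
      (fun a b => by
        have hc : (0:ℝ) ≤ 1/n := by positivity
        simpa using (mul_max_of_nonneg a b hc))
    exact h.symm
  set M : ℕ := H.card with hM
  have hM1 : (1:ℝ) ≤ M := by
    exact_mod_cast Nat.one_le_iff_ne_zero.mpr (Finset.card_ne_zero_of_mem hH.choose_spec)
  have hMpos : (0:ℝ) < M := lt_of_lt_of_le one_pos hM1
  have hlogM : 0 ≤ Real.log M := Real.log_nonneg hM1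
  set A : ℝ := (∑ σ : Fin n → Bool, G σ) / 2 ^ n with hA
  -- key MGF bound
  have key : ∀ t : ℝ, 0 < t → t * A ≤ Real.log M + n * t ^ 2 / 2 := by
    intro t ht
    have h1 : Real.exp (t * A) ≤ (M : ℝ) * Real.exp (n * t ^ 2 / 2) := by
      -- Jensen
      have hw : ∑ _σ : Fin n → Bool, ((1:ℝ)/2^n) = 1 := by
        rw [Finset.sum_const, Finset.card_univ]
        simp [Fintype.card_fun]
      have hjen : Real.exp (∑ σ : Fin n → Bool, ((1:ℝ)/2^n) • (t * G σ))
          ≤ ∑ σ : Fin n → Bool, ((1:ℝ)/2^n) • Real.exp (t * G σ) := by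
        refine convexOn_exp.map_sum_le (fun _ _ => by positivity) hw (fun _ _ => trivial)
      have hTA : t * A = ∑ σ : Fin n → Bool, ((1:ℝ)/2^n) • (t * G σ) := by
        simp only [smul_eq_mul, hA, ← Finset.mul_sum]
        ring
      rw [hTA]
      refine hjen.trans ?_
      -- bound each exp(t G σ) by sum over h, then exchange sums
      have h2 : ∀ σ : Fin n → Bool,
          Real.exp (t * G σ) ≤ ∑ h ∈ H, Real.exp (t * ∑ i, e σ i * h (x i)) := by
        intro σ
        obtain ⟨h₀, hh₀, hEq⟩ := H.exists_mem_eq_sup' hH (fun h => ∑ i, e σ i * h (x i))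
        have hGs : G σ = ∑ i, e σ i * h₀ (x i) := hEq
        rw [hGs]
        exact Finset.single_le_sum
          (f := fun h : X → ℝ => Real.exp (t * ∑ i, e σ i * h (x i)))
          (fun h _ => (Real.exp_pos _).le) hh₀
      have h3 : ∑ σ : Fin n → Bool, ((1:ℝ)/2^n) • Real.exp (t * G σ)
          ≤ ((1:ℝ)/2^n) * ∑ σ : Fin n → Bool, ∑ h ∈ H, Real.exp (t * ∑ i, e σ i * h (x i)) := by
        rw [Finset.mul_sum]
        refine Finset.sum_le_sum (fun σ _ => ?_)
        simp only [smul_eq_mul]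
        exact mul_le_mul_of_nonneg_left (h2 σ) (by positivity)
      refine h3.trans ?_
      rw [Finset.sum_comm]
      have h4 : ∀ h ∈ H, ∑ σ : Fin n → Bool, Real.exp (t * ∑ i, e σ i * h (x i))
          ≤ 2 ^ n * Real.exp (n * t ^ 2 / 2) := by
        intro h hh
        have hfac : ∑ σ : Fin n → Bool, Real.exp (t * ∑ i, e σ i * h (x i))
            = ∏ i : Fin n, ∑ b : Bool, Real.exp (t * ((if b then (1:ℝ) else -1) * h (x i))) := by
          rw [Fintype.prod_sum]
          refine Finset.sum_congr rfl (fun σ _ => ?_)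
          rw [Finset.mul_sum, Real.exp_sum]
        rw [hfac]
        have hbound : ∀ i : Fin n,
            ∑ b : Bool, Real.exp (t * ((if b then (1:ℝ) else -1) * h (x i)))
            ≤ 2 * Real.exp (t ^ 2 / 2) := by
          intro i
          have hsum : ∑ b : Bool, Real.exp (t * ((if b then (1:ℝ) else -1) * h (x i)))
              = 2 * Real.cosh (t * h (x i)) := by
            rw [Fintype.sum_bool]
            norm_num [Real.cosh_eq, mul_neg, neg_mul]
            ring
          rw [hsum]
          have hc := Real.cosh_le_exp_half_sq (t * h (x i))
          have hsq : (t * h (x i)) ^ 2 / 2 ≤ t ^ 2 / 2 := by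
            have hb := hbdd h hh i
            have : (h (x i)) ^ 2 ≤ 1 := by
              nlinarith [abs_nonneg (h (x i)), sq_abs (h (x i))]
            nlinarith [sq_nonneg t]
          have := hc.trans (Real.exp_le_exp.mpr hsq)
          linarith [this]
        calc ∏ i : Fin n, ∑ b : Bool, Real.exp (t * ((if b then (1:ℝ) else -1) * h (x i)))
            ≤ ∏ i : Fin n, (2 * Real.exp (t ^ 2 / 2)) := by
              refine Finset.prod_le_prod (fun i _ => ?_) (fun i _ => hbound i)
              positivity
          _ = 2 ^ n * Real.exp (n * t ^ 2 / 2) := by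
              rw [Finset.prod_const, Finset.card_univ, Fintype.card_fin, mul_pow,
                ← Real.exp_nat_mul, mul_div_assoc]
      have h5 : ∑ h ∈ H, ∑ σ : Fin n → Bool, Real.exp (t * ∑ i, e σ i * h (x i))
          ≤ M * (2 ^ n * Real.exp (n * t ^ 2 / 2)) := by
        have := Finset.sum_le_sum h4
        simpa [hM, Finset.sum_const, nsmul_eq_mul] using this
      calc ((1:ℝ)/2^n) * ∑ h ∈ H, ∑ σ : Fin n → Bool, Real.exp (t * ∑ i, e σ i * h (x i))
          ≤ ((1:ℝ)/2^n) * (M * (2 ^ n * Real.exp (n * t ^ 2 / 2))) :=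
            mul_le_mul_of_nonneg_left h5 (by positivity)
        _ = M * Real.exp (n * t ^ 2 / 2) := by field_simp
    have h6 : Real.exp (t * A) ≤ Real.exp (Real.log M + n * t ^ 2 / 2) := by
      rwa [Real.exp_add, Real.exp_log hMpos]
    exact Real.exp_le_exp.mp h6
  -- rewrite goal
  have hgoal : (∑ σ : Fin n → Bool,
      H.sup' hH (fun h => ((1:ℝ)/n) * ∑ i, (if σ i then (1:ℝ) else -1) * h (x i))) / 2 ^ n
      = (1/n) * A := by
    rw [hA]
    rw [show (∑ σ : Fin n → Bool,
        H.sup' hH (fun h => ((1:ℝ)/n) * ∑ i, (if σ i then (1:ℝ) else -1) * h (x i)))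
        = ∑ σ : Fin n → Bool, (1/n) * G σ from Finset.sum_congr rfl (fun σ _ => hpull σ)]
    rw [← Finset.mul_sum]
    ring
  rw [hgoal]
  rcases eq_or_lt_of_le hlogM with h0 | h0
  · -- log M = 0
    have hA0 : A ≤ 0 := by
      by_contra hc
      push_neg at hc
      have hk := key (A / n) (by positivity)
      rw [← h0] at hk
      have hexp : (n:ℝ) * (A / n) ^ 2 / 2 = A ^ 2 / (2 * n) := by
        field_simp
      rw [hexp] at hk
      have h7 : A ^ 2 / n ≤ A ^ 2 / (2 * n) := by
        calc A ^ 2 / n = A / n * A := by ring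
          _ ≤ 0 + A ^ 2 / (2 * n) := hk
          _ = A ^ 2 / (2 * n) := by ring
      have h8 : A ^ 2 / (2 * n) < A ^ 2 / n :=
        div_lt_div_of_pos_left (by positivity) (by positivity) (by linarith)
      linarith
    have : (1:ℝ)/n * A ≤ 0 := by
      apply mul_nonpos_of_nonneg_of_nonpos (by positivity) hA0
    exact this.trans (Real.sqrt_nonneg _)
  · -- log M > 0
    set t : ℝ := Real.sqrt (2 * Real.log M / n) with ht
    have htpos : 0 < t := Real.sqrt_pos.mpr (by positivity)
    have ht2 : t ^ 2 = 2 * Real.log M / n := Real.sq_sqrt (by positivity)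
    have hk := key t htpos
    have hlog_eq : Real.log M = n * t ^ 2 / 2 := by
      rw [ht2]; field_simp
    rw [hlog_eq] at hk
    -- t * A ≤ n * t^2, so A ≤ n*t, so A/n ≤ t
    have hAle : A ≤ n * t := by
      have h8 : t * A ≤ n * t ^ 2 := by linarith
      nlinarith
    rw [ht]
    calc (1:ℝ)/n * A ≤ (1:ℝ)/n * (n * t) := by
          apply mul_le_mul_of_nonneg_left hAle (by positivity)
      _ = t := by field_simp
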